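/- Let H ∈ (0,1) and B a real fBm. There is a constant C depending only on H such that for all ε > 0 and all 0 < s < t with t − s > 0, |Cov(D⁰_ε B_t, B_t − B_s)| ≤ C |t−s|^{2H−1}, where D⁰_ε B_t = (B_{t+ε} − B_{t−ε})/(2ε). -/

import Mathlib

open MeasureTheory

/-- Covariance function of real fractional Brownian motion with Hurst index `H`. -/
noncomputable def fbmCov (H s t : ℝ) : ℝ :=
  (|s| ^ (2 * H) + |t| ^ (2 * H) - |s - t| ^ (2 * H)) / 2

/-- `B` is a (two-sided) real fractional Brownian motion with Hurst index `H`: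
a centered Gaussian process with covariance `fbmCov H`, characterized by its
finite-dimensional characteristic functions. -/
def IsFBM1 {Ω : Type*} [MeasurableSpace Ω] (H : ℝ) (P : MeasureTheory.Measure Ω)
    (B : ℝ → Ω → ℝ) : Prop :=
  ∀ (n : ℕ) (t : Fin n → ℝ) (c : Fin n → ℝ),
    ∫ ω, Complex.exp (Complex.I * ((∑ i, c i * B (t i) ω : ℝ) : ℂ)) ∂P =
      Complex.exp (-(((∑ i, ∑ i', c i * c i' * fbmCov H (t i) (t i') : ℝ) : ℂ)) / 2)

/-!
The covariance is a second difference of the fBm covariance: with `d = t - s` it equals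
`((d + ε) ^ (2H) - |d - ε| ^ (2H)) / (4ε)`, the Gaussian moments being read off the
characteristic functions in the definition of `IsFBM1`. By homogeneity it suffices to bound
`(1 + x) ^ a - |1 - x| ^ a` for `x ∈ [0, 1]` and `a = 2H ≤ 2`, and comparing with the exponent
`2` gives `(1 + x) ^ 2 - (1 - x) ^ 2 = 4x`. Hence the bound holds with `C = 1`.
-/

open Real Complex Filter Topology ProbabilityTheory

lemma one_add_rpow_sub_abs_one_sub_rpow_le {a x : ℝ} (ha0 : 0 ≤ a) (ha2 : a ≤ 2)
    (hx0 : 0 ≤ x) (hx1 : x ≤ 1) : (1 + x) ^ a - |1 - x| ^ a ≤ 4 * x := by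
  rw [abs_of_nonneg (by linarith)]
  have hplus : (1 + x) ^ a ≤ (1 + x) ^ (2 : ℝ) := rpow_le_rpow_of_exponent_le (by linarith) ha2
  have hminus : (1 - x) ^ (2 : ℝ) ≤ (1 - x) ^ a :=
    rpow_le_rpow_of_exponent_ge' (by linarith) (by linarith) ha0 ha2
  rw [rpow_two] at hplus hminus
  nlinarith

lemma add_rpow_sub_abs_sub_rpow_le_of_le {a u v : ℝ} (ha0 : 0 ≤ a) (ha2 : a ≤ 2)
    (hu : 0 < u) (hv : 0 ≤ v) (hvu : v ≤ u) :
    (u + v) ^ a - |u - v| ^ a ≤ 4 * v * u ^ (a - 1) := by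
  have hx := one_add_rpow_sub_abs_one_sub_rpow_le ha0 ha2 (div_nonneg hv hu.le)
    ((div_le_one hu).2 hvu)
  have hscale : ∀ y : ℝ, u ^ a * |y| ^ a = |u * y| ^ a := fun y => by
    rw [abs_mul, abs_of_pos hu, mul_rpow hu.le (abs_nonneg y)]
  calc (u + v) ^ a - |u - v| ^ a
      = u ^ a * ((1 + v / u) ^ a - |1 - v / u| ^ a) := by
        rw [mul_sub, ← abs_of_pos (by positivity : 0 < 1 + v / u), hscale, hscale, mul_add,
          mul_sub, mul_div_cancel₀ _ hu.ne', mul_one, abs_of_pos (by positivity : 0 < u + v)]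
    _ ≤ u ^ a * (4 * (v / u)) := mul_le_mul_of_nonneg_left hx (by positivity)
    _ = 4 * v * u ^ (a - 1) := by rw [rpow_sub_one hu.ne']; ring

lemma add_rpow_sub_abs_sub_rpow_le {a u v : ℝ} (ha0 : 0 ≤ a) (ha2 : a ≤ 2)
    (hu : 0 < u) (hv : 0 < v) : (u + v) ^ a - |u - v| ^ a ≤ 4 * v * u ^ (a - 1) := by
  rcases le_total v u with hvu | huv
  · exact add_rpow_sub_abs_sub_rpow_le_of_le ha0 ha2 hu hv.le hvu
  · have hswap := add_rpow_sub_abs_sub_rpow_le_of_le ha0 ha2 hv hu.le huv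
    rw [add_comm, abs_sub_comm] at hswap
    have hpow : v ^ (a - 2) ≤ u ^ (a - 2) := rpow_le_rpow_of_nonpos hu huv (by linarith)
    have hsplit : ∀ w : ℝ, 0 < w → w ^ (a - 1) = w * w ^ (a - 2) := fun w hw => by
      rw [show a - 1 = 1 + (a - 2) by ring, rpow_add hw, rpow_one]
    calc (u + v) ^ a - |u - v| ^ a ≤ 4 * u * (v * v ^ (a - 2)) := by rwa [← hsplit v hv]
      _ ≤ 4 * u * (v * u ^ (a - 2)) := by gcongr
      _ = 4 * v * u ^ (a - 1) := by rw [hsplit u hu]; ring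

lemma abs_sub_rpow_le_add_rpow {a u v : ℝ} (ha : 0 ≤ a) (hu : 0 ≤ u) (hv : 0 ≤ v) :
    |u - v| ^ a ≤ (u + v) ^ a :=
  rpow_le_rpow (abs_nonneg _) (abs_sub_le_iff.2 ⟨by linarith, by linarith⟩) ha

lemma aemeasurable_of_forall_aestronglyMeasurable_cexp {Ω : Type*} [MeasurableSpace Ω]
    {P : Measure Ω} {X : Ω → ℝ}
    (hX : ∀ z : ℝ, AEStronglyMeasurable (fun ω => cexp (((z * X ω : ℝ) : ℂ) * I)) P) :
    AEMeasurable X P := by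
  set r : ℕ → ℝ := fun k => ((k : ℝ) + 1)⁻¹
  have hr : Tendsto r atTop (𝓝 0) := tendsto_inv_atTop_zero.comp
    (tendsto_atTop_add_const_right _ 1 tendsto_natCast_atTop_atTop)
  refine aemeasurable_of_tendsto_metrizable_ae'
    (f := fun k ω => (r k)⁻¹ * arg (cexp (((r k * X ω : ℝ) : ℂ) * I)))
    (fun k => (measurable_arg.comp_aemeasurable (hX (r k)).aemeasurable).const_mul _)
    (ae_of_all _ fun ω => tendsto_const_nhds.congr' ?_)
  -- `arg` inverts `x ↦ exp (x I)` on `(-π, π]`, which eventually contains `r k * X ω`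
  have hsmall : ∀ᶠ k in atTop, |r k * X ω| < π := by
    simpa using (hr.mul_const (X ω)).abs.eventually (gt_mem_nhds (by simpa using pi_pos))
  filter_upwards [hsmall] with k hk
  rw [arg_exp_mul_I, toIocMod_eq_self _ |>.2, ← mul_assoc, inv_mul_cancel₀ (by positivity),
    one_mul]
  exact ⟨by linarith [neg_abs_le (r k * X ω)], by linarith [le_abs_self (r k * X ω)]⟩

lemma fbmCov_comm (H s t : ℝ) : fbmCov H s t = fbmCov H t s := by
  rw [fbmCov, fbmCov, abs_sub_comm, add_comm (|s| ^ _)]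

lemma fbmCov_sub_sub_add (H ε s t : ℝ) :
    fbmCov H (t + ε) t - fbmCov H (t + ε) s - fbmCov H (t - ε) t + fbmCov H (t - ε) s =
      (|t - s + ε| ^ (2 * H) - |t - s - ε| ^ (2 * H)) / 2 := by
  simp only [fbmCov]
  rw [show t + ε - t = ε by ring, show t - ε - t = -ε by ring, abs_neg,
    show t + ε - s = t - s + ε by ring, show t - ε - s = t - s - ε by ring]
  ring

section FBM

variable {Ω : Type*} [MeasurableSpace Ω] {P : Measure Ω} {H : ℝ} {B : ℝ → Ω → ℝ}

lemma IsFBM1.integrable_cexp (hB : IsFBM1 H P B) (n : ℕ) (t c : Fin n → ℝ) :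
    Integrable (fun ω => cexp (I * ((∑ i, c i * B (t i) ω : ℝ) : ℂ))) P := by
  by_contra hint
  exact Complex.exp_ne_zero _ ((hB n t c).symm.trans (integral_undef hint))

lemma IsFBM1.aemeasurable (hB : IsFBM1 H P B) (u : ℝ) : AEMeasurable (B u) P :=
  aemeasurable_of_forall_aestronglyMeasurable_cexp fun z => by
    simpa [mul_comm _ I] using
      (hB.integrable_cexp 1 (fun _ => u) (fun _ => z)).aestronglyMeasurable

variable [IsProbabilityMeasure P]

lemma IsFBM1.sum_sum_mul_fbmCov_nonneg (hB : IsFBM1 H P B) (n : ℕ) (t c : Fin n → ℝ) :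
    0 ≤ ∑ i, ∑ j, c i * c j * fbmCov H (t i) (t j) := by
  have hle := norm_integral_le_of_norm_le_const (μ := P) (C := 1)
    (f := fun ω => cexp (I * ((∑ i, c i * B (t i) ω : ℝ) : ℂ)))
    (ae_of_all _ fun ω => (norm_exp_I_mul_ofReal _).le)
  rw [hB n t c, norm_exp, probReal_univ, mul_one, Real.exp_le_one_iff, div_ofNat_re, neg_re,
    ofReal_re] at hle
  linarith

theorem IsFBM1.map_sum_eq_gaussianReal (hB : IsFBM1 H P B) (n : ℕ) (t c : Fin n → ℝ) :
    P.map (fun ω => ∑ i, c i * B (t i) ω) =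
      gaussianReal 0 (∑ i, ∑ j, c i * c j * fbmCov H (t i) (t j)).toNNReal := by
  set V : Ω → ℝ := fun ω => ∑ i, c i * B (t i) ω
  set Q : ℝ := ∑ i, ∑ j, c i * c j * fbmCov H (t i) (t j)
  have hV : AEMeasurable V P :=
    Finset.aemeasurable_fun_sum _ fun i _ => (hB.aemeasurable (t i)).const_mul _
  have := Measure.isProbabilityMeasure_map (μ := P) hV
  refine Measure.ext_of_charFun (funext fun z => ?_)
  have hsum : ∀ ω, ∑ i, z * c i * B (t i) ω = z * V ω := fun ω => by
    simp only [V, Finset.mul_sum, mul_assoc]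
  have hform : ∑ i, ∑ j, z * c i * (z * c j) * fbmCov H (t i) (t j) = Q * z ^ 2 := by
    simp only [Q, Finset.sum_mul]
    exact Finset.sum_congr rfl fun i _ => Finset.sum_congr rfl fun j _ => by ring
  have hchar := hB n t (fun i => z * c i)
  simp only [hsum, hform] at hchar
  rw [charFun_apply_real, integral_map hV (by fun_prop), charFun_gaussianReal,
    Real.coe_toNNReal _ (hB.sum_sum_mul_fbmCov_nonneg n t c)]
  convert hchar using 4 <;> push_cast [Q] <;> ring

lemma IsFBM1.integral_sq_sum (hB : IsFBM1 H P B) (n : ℕ) (t c : Fin n → ℝ) :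
    Integrable (fun ω => (∑ i, c i * B (t i) ω) ^ 2) P ∧
      ∫ ω, (∑ i, c i * B (t i) ω) ^ 2 ∂P = ∑ i, ∑ j, c i * c j * fbmCov H (t i) (t j) := by
  set V : Ω → ℝ := fun ω => ∑ i, c i * B (t i) ω
  have hV : AEMeasurable V P :=
    Finset.aemeasurable_fun_sum _ fun i _ => (hB.aemeasurable (t i)).const_mul _
  have hmap : P.map V = _ := hB.map_sum_eq_gaussianReal n t c
  have hsq : Integrable (fun x : ℝ => x ^ 2) (P.map V) :=
    hmap ▸ (memLp_id_gaussianReal 2).integrable_sq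
  refine ⟨(integrable_map_measure (by fun_prop) hV).1 hsq, ?_⟩
  calc ∫ ω, V ω ^ 2 ∂P = ∫ x, id x ^ 2 ∂(P.map V) :=
        (integral_map (f := fun x : ℝ => id x ^ 2) hV (by fun_prop)).symm
    _ = _ := by
      rw [hmap, ← variance_of_integral_eq_zero aemeasurable_id integral_id_gaussianReal,
        variance_id_gaussianReal, Real.coe_toNNReal _ (hB.sum_sum_mul_fbmCov_nonneg n t c)]

lemma IsFBM1.integral_mul (hB : IsFBM1 H P B) (u v : ℝ) :
    Integrable (fun ω => B u ω * B v ω) P ∧ ∫ ω, B u ω * B v ω ∂P = fbmCov H u v := by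
  obtain ⟨hint_add, hsq_add⟩ := hB.integral_sq_sum 2 ![u, v] ![1, 1]
  obtain ⟨hint_sub, hsq_sub⟩ := hB.integral_sq_sum 2 ![u, v] ![1, -1]
  simp only [Fin.sum_univ_two, Matrix.cons_val_zero, Matrix.cons_val_one, Matrix.cons_val_fin_one,
    one_mul, mul_one, neg_mul, mul_neg, ← sub_eq_add_neg, Finset.sum_sub_distrib]
    at hint_add hsq_add hint_sub hsq_sub
  have hpolar : (fun ω => B u ω * B v ω) =
      fun ω => ((B u ω + B v ω) ^ 2 - (B u ω - B v ω) ^ 2) / 4 := by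
    ext; ring
  rw [hpolar, integral_div, integral_sub hint_add hint_sub, hsq_add, hsq_sub, fbmCov_comm H v u]
  exact ⟨(hint_add.sub hint_sub).div_const 4, by ring⟩

lemma IsFBM1.integral_sub_mul_sub (hB : IsFBM1 H P B) (a b c d : ℝ) :
    ∫ ω, (B a ω - B b ω) * (B c ω - B d ω) ∂P =
      fbmCov H a c - fbmCov H a d - fbmCov H b c + fbmCov H b d := by
  have hexpand : (fun ω => (B a ω - B b ω) * (B c ω - B d ω)) =
      fun ω => B a ω * B c ω - B a ω * B d ω - B b ω * B c ω + B b ω * B d ω := by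
    ext; ring
  obtain ⟨hac, hac'⟩ := hB.integral_mul a c
  obtain ⟨had, had'⟩ := hB.integral_mul a d
  obtain ⟨hbc, hbc'⟩ := hB.integral_mul b c
  obtain ⟨hbd, hbd'⟩ := hB.integral_mul b d
  rw [hexpand, integral_add ?_ hbd, integral_sub ?_ hbc, integral_sub hac had, hac', had', hbc',
    hbd']
  exacts [hac.sub had, (hac.sub had).sub hbc]

end FBM

theorem stmt11 {Ω : Type*} [MeasurableSpace Ω] (P : Measure Ω) [IsProbabilityMeasure P]
    (H : ℝ) (hH : H ∈ Set.Ioo (0:ℝ) 1) (B : ℝ → Ω → ℝ) (hB : IsFBM1 H P B) :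
    ∃ C : ℝ, 0 < C ∧ ∀ ε : ℝ, 0 < ε → ∀ s t : ℝ, 0 < s → s < t →
      |∫ ω, ((B (t + ε) ω - B (t - ε) ω) / (2 * ε)) * (B t ω - B s ω) ∂P| ≤
        C * |t - s| ^ (2 * H - 1) := by
  obtain ⟨hH0, hH1⟩ := hH
  refine ⟨1, one_pos, fun ε hε s t _ hst => ?_⟩
  have hd : 0 < t - s := sub_pos.2 hst
  have hcov : ∫ ω, ((B (t + ε) ω - B (t - ε) ω) / (2 * ε)) * (B t ω - B s ω) ∂P =
      ((t - s + ε) ^ (2 * H) - |t - s - ε| ^ (2 * H)) / (4 * ε) := by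
    simp_rw [div_mul_eq_mul_div]
    rw [integral_div, hB.integral_sub_mul_sub, fbmCov_sub_sub_add, abs_of_pos (by linarith)]
    field_simp
    ring
  have hnonneg := abs_sub_rpow_le_add_rpow (a := 2 * H) (by linarith) hd.le hε.le
  rw [hcov, abs_of_nonneg (div_nonneg (sub_nonneg.2 hnonneg) (by positivity)), abs_of_pos hd,
    one_mul, div_le_iff₀ (by positivity)]
  linarith [add_rpow_sub_abs_sub_rpow_le (a := 2 * H) (by linarith) (by linarith) hd hε]
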